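/- Let Γ be a finite simplicial graph whose vertices are labeled by nontrivial cyclic groups and let G_Γ be the associated graph product. If Γ has a SIL, then there exist two partial conjugations of G_Γ whose commutator is not an inner automorphism of G_Γ; in particular Out^pc(G_Γ) is not abelian. -/

import Mathlib

open Monoid
open scoped commutatorElement

namespace ArXiv

universe u uG

variable {V : Type u}

/-- The star of a vertex: the vertex together with its neighbors. -/
def star (Γ : SimpleGraph V) (v : V) : Set V := insert v (Γ.neighborSet v)

/-- `C ⊆ V` is the vertex set of a connected component of the full subgraph of `Γ`
induced on `S`. -/
def IsCompOf (Γ : SimpleGraph V) (S : Set V) (C : Set V) : Prop :=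
  ∃ c : (Γ.induce S).ConnectedComponent, C = Subtype.val '' c.supp

/-- `Γ` has a separating intersection of links: there are distinct non-adjacent vertices
`v, w` such that some connected component of `Γ ∖ (lk(v) ∩ lk(w))` contains neither `v`
nor `w`. -/
def HasSIL (Γ : SimpleGraph V) : Prop :=
  ∃ v w : V, v ≠ w ∧ ¬ Γ.Adj v w ∧
    ∃ C : Set V, IsCompOf Γ ((Γ.neighborSet v ∩ Γ.neighborSet w)ᶜ) C ∧ v ∉ C ∧ w ∉ C

variable (Γ : SimpleGraph V) (G : V → Type uG) [∀ v, Group (G v)]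

/-- The commutator relators defining the graph product. -/
def rels : Set (Monoid.CoprodI G) :=
  {x | ∃ (v w : V) (_ : Γ.Adj v w) (g : G v) (h : G w),
    x = CoprodI.of g * CoprodI.of h * (CoprodI.of g)⁻¹ * (CoprodI.of h)⁻¹}

/-- The graph product of the vertex groups `G v` over the graph `Γ`: the quotient of the
free product by the normal closure of the commutators of adjacent vertex groups. -/
def GraphProduct : Type (max u uG) :=
  Monoid.CoprodI G ⧸ Subgroup.normalClosure (rels Γ G)

instance : Group (GraphProduct Γ G) :=
  inferInstanceAs (Group (Monoid.CoprodI G ⧸ Subgroup.normalClosure (rels Γ G)))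

/-- The canonical map from a vertex group into the graph product. -/
def of {v : V} : G v →* GraphProduct Γ G :=
  (QuotientGroup.mk' (Subgroup.normalClosure (rels Γ G))).comp CoprodI.of

theorem of_commute {v w : V} (h : Γ.Adj v w) (g : G v) (k : G w) :
    Commute (of Γ G g) (of Γ G k) := by
  rw [← commutatorElement_eq_one_iff_commute]
  have hmem : (CoprodI.of g * CoprodI.of k * (CoprodI.of g)⁻¹ * (CoprodI.of k)⁻¹ :
      Monoid.CoprodI G) ∈ Subgroup.normalClosure (rels Γ G) :=
    Subgroup.subset_normalClosure ⟨v, w, h, g, k, rfl⟩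
  have h1 : (QuotientGroup.mk' (Subgroup.normalClosure (rels Γ G)))
      (CoprodI.of g * CoprodI.of k * (CoprodI.of g)⁻¹ * (CoprodI.of k)⁻¹) = 1 :=
    (QuotientGroup.eq_one_iff _).mpr hmem
  simp only [map_mul, map_inv] at h1
  rw [commutatorElement_def]
  exact h1

/-- `π` is the partial conjugation `π_{v,C}`, for vertex groups with chosen generators
`gen`: it conjugates the generators in `C` by (the generator of) `v` and fixes all other
generators. -/
def IsPartialConj (gen : ∀ v, G v) (π : MulAut (GraphProduct Γ G)) (v : V) (C : Set V) :
    Prop :=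
  (∀ u ∈ C, ∀ g : G u, π (of Γ G g) = of Γ G (gen v) * of Γ G g * (of Γ G (gen v))⁻¹) ∧
  (∀ u ∉ C, ∀ g : G u, π (of Γ G g) = of Γ G g)

/-- `π` is the partial conjugation `π_{a,C}` by the element `a` of the vertex group `G v`:
it conjugates the vertex groups in `C` by `a` and fixes all other vertex groups. -/
def IsPartialConjBy {v : V} (a : G v) (π : MulAut (GraphProduct Γ G)) (C : Set V) : Prop :=
  (∀ u ∈ C, ∀ g : G u, π (of Γ G g) = of Γ G a * of Γ G g * (of Γ G a)⁻¹) ∧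
  (∀ u ∉ C, ∀ g : G u, π (of Γ G g) = of Γ G g)

/-- The vertex set of the graph `Γ̃`: pairs `p_{v,C}` where `C` is a connected component
of `Γ ∖ st(v)`. -/
def TV : Type u := {p : V × Set V // IsCompOf Γ ((star Γ p.1)ᶜ) p.2}

/-- The graph `Γ̃`: vertices `p_{v,C}` and `p_{w,D}` are joined by an edge unless
`v, w` are distinct non-adjacent vertices with `v ∈ D` and `w ∈ C`. -/
def tilde : SimpleGraph (TV Γ) where
  Adj p q := p ≠ q ∧
    ¬(p.1.1 ≠ q.1.1 ∧ ¬ Γ.Adj p.1.1 q.1.1 ∧ p.1.1 ∈ q.1.2 ∧ q.1.1 ∈ p.1.2)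
  symm := by
    constructor
    rintro p q ⟨h1, h2⟩
    exact ⟨h1.symm, fun ⟨a, b, c, d⟩ => h2 ⟨a.symm, fun e => b e.symm, d, c⟩⟩
  loopless := ⟨fun p h => h.1 rfl⟩

/-- The graph product `G_{Γ̃}`, where the vertex `p_{v,C}` is labeled by (a copy of) the
group `G v`. -/
abbrev TildeProduct : Type (max u uG) :=
  GraphProduct (tilde Γ) (fun p : TV Γ => G p.1.1)

/-- The element `p_v = ∏_C p_{v,C} ∈ G_{Γ̃}`, the product over all connected components
`C` of `Γ ∖ st(v)` (the factors pairwise commute). -/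
noncomputable def pvert [Finite V] (gen : ∀ v, G v) (v : V) : TildeProduct Γ G :=
  haveI : Fintype {C : Set V // IsCompOf Γ ((star Γ v)ᶜ) C} := Fintype.ofFinite _
  Finset.noncommProd (Finset.univ : Finset {C : Set V // IsCompOf Γ ((star Γ v)ᶜ) C})
    (fun c => of (tilde Γ) (fun p : TV Γ => G p.1.1) (v := ⟨(v, c.1), c.2⟩) (gen v))
    (by
      intro a _ b _ hab
      have hadj : (tilde Γ).Adj ⟨(v, a.1), a.2⟩ ⟨(v, b.1), b.2⟩ := by
        refine ⟨fun h => hab (Subtype.ext (congrArg (fun x : TV Γ => x.1.2) h)), ?_⟩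
        rintro ⟨hne, -⟩
        exact hne rfl
      exact of_commute (tilde Γ) (fun p : TV Γ => G p.1.1) hadj (gen v) (gen v))

/-- The set `Δ` of vertices adjacent to every other vertex of `Γ`. -/
def Delta (Γ : SimpleGraph V) : Set V := {v | ∀ u, u ≠ v → Γ.Adj v u}

/-- The subgroup of the graph product generated by the vertex groups `G v`, `v ∈ T`. -/
def vertexSubgroup (T : Set V) : Subgroup (GraphProduct Γ G) :=
  Subgroup.closure {x | ∃ v ∈ T, ∃ g : G v, x = of Γ G g}

/-- `w` is a reduced word for the element `g` of the graph product: a minimal length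
expression of `g` as a product of nontrivial elements of vertex groups. -/
def IsReducedWord (g : GraphProduct Γ G) (w : List (Σ v : V, G v)) : Prop :=
  (w.map fun l => of Γ G l.2).prod = g ∧ (∀ l ∈ w, l.2 ≠ 1) ∧
    ∀ w' : List (Σ v : V, G v), (w'.map fun l => of Γ G l.2).prod = g →
      w.length ≤ w'.length

end ArXiv

/-! Let `v, w` and a component `C₀` of `Γ ∖ (lk v ∩ lk w)` witness the SIL and pick `u ∈ C₀`.
Let `C` be the component of `u` in `Γ ∖ st v` and `D` the component of `v` in `Γ ∖ st w`. Both
complements of stars lie in `Γ ∖ (lk v ∩ lk w)`, so `w ∉ C` and `u ∉ D`, as either would put `v`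
or `w` into `C₀`; and `v, w, u` are pairwise non-adjacent.

If `⁅π_{v,C}, π_{w,D}⁆` were conjugation by `h`, then, with `a, b, c` the generators of `v, w, u`,
`h` would centralize `a` and `b`, and `h ⁅a⁻¹, b⁆` would centralize `c`. Map to the free product
`G_v ∗ G_w ∗ G_u` (killing the other vertices). There the centralizer of a nontrivial letter lies
in its factor, so `h ↦ 1`; then `⁅a⁻¹, b⁆` would lie in `G_u`, and since it dies in
`G_v × G_w × G_u` it would be trivial, i.e. `a` and `b` would commute. -/

namespace Monoid.CoprodI

variable {ι : Type*} {M : ι → Type*} [∀ i, Group (M i)]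

theorem eq_one_of_of_eq_of [DecidableEq ι] {i j : ι} (hij : i ≠ j) {x : M i} {y : M j}
    (h : (of x : CoprodI M) = of y) : x = 1 := by
  simpa [Pi.mulSingle_eq_of_ne hij] using
    congrFun (congrArg (lift (MonoidHom.mulSingle M)) h) i

variable [∀ i, DecidableEq (M i)]

namespace Word

theorem length_tail_le_length_rcons {i : ι} (p : Pair M i) :
    p.tail.toList.length ≤ (rcons p).toList.length := by
  unfold rcons; split_ifs <;> simp [cons]

theorem length_rcons_le {i : ι} (p : Pair M i) :
    (rcons p).toList.length ≤ p.tail.toList.length + 1 := by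
  unfold rcons; split_ifs <;> simp [cons]

variable [DecidableEq ι]

theorem length_of_smul_le {i : ι} (m : M i) (w : Word M) :
    (of m • w).toList.length ≤ w.toList.length + 1 := by
  have h := length_tail_le_length_rcons (equivPair i w)
  rw [← equivPair_symm, Equiv.symm_apply_apply] at h
  rw [of_smul_def]
  exact (length_rcons_le _).trans (by simpa using h)

theorem length_prod_smul_le (w w' : Word M) :
    (w.prod • w').toList.length ≤ w.toList.length + w'.toList.length := by
  induction w using consRecOn with
  | empty => simp
  | cons i m w h1 h2 ih =>
    rw [prod_cons, mul_smul]
    have : (cons m w h1 h2).toList.length = w.toList.length + 1 := rfl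
    have := length_of_smul_le m (w.prod • w')
    omega

end Word

open Word

variable [DecidableEq ι]

def wordLength (x : CoprodI M) : ℕ := (Word.equiv x).toList.length

theorem equiv_mul (x y : CoprodI M) : Word.equiv (x * y) = x • Word.equiv y :=
  mul_smul x y (Word.empty : Word M)

theorem wordLength_mul_le (x y : CoprodI M) : wordLength (x * y) ≤ wordLength x + wordLength y := by
  unfold wordLength
  rw [equiv_mul]
  conv_lhs => rw [← Word.equiv.symm_apply_apply x]
  exact length_prod_smul_le _ _

theorem wordLength_of_le {i : ι} (m : M i) : wordLength (of m : CoprodI M) ≤ 1 :=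
  length_of_smul_le m Word.empty

theorem equiv_of_mul {i : ι} {m : M i} (hm : m ≠ 1) {x : CoprodI M}
    (hx : (Word.equiv x).fstIdx ≠ some i) :
    Word.equiv (of m * x) = cons m (Word.equiv x) hx hm := by
  rw [equiv_mul, cons_eq_smul]

theorem fstIdx_equiv_of_mul {i : ι} {m : M i} (hm : m ≠ 1) {x : CoprodI M}
    (hx : (Word.equiv x).fstIdx ≠ some i) : (Word.equiv (of m * x)).fstIdx = some i := by
  rw [equiv_of_mul hm hx]; rfl

theorem wordLength_of_mul {i : ι} {m : M i} (hm : m ≠ 1) {x : CoprodI M}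
    (hx : (Word.equiv x).fstIdx ≠ some i) : wordLength (of m * x) = wordLength x + 1 := by
  rw [wordLength, equiv_of_mul hm hx]; rfl

/-- Stated for `SemiconjBy` rather than `Commute` so that the induction on the reduced word of `s`
can peel off a first letter from the factor `M i` by conjugating `a'`. -/
theorem mem_range_of_of_semiconjBy {i : ι} {a a' : M i} (ha : a ≠ 1) {s : CoprodI M}
    (h : SemiconjBy s (of a) (of a')) : s ∈ (of : M i →* CoprodI M).range := by
  suffices ∀ (w : Word M) (a' : M i), SemiconjBy w.prod (of a) (of a') →
      w.prod ∈ (of : M i →* CoprodI M).range by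
    have hs : (Word.equiv s).prod = s := Word.equiv.symm_apply_apply s
    exact hs ▸ this _ a' (hs.symm ▸ h)
  intro w
  induction w using consRecOn with
  | empty => simp
  | cons k m w h1 h2 ih =>
    intro a' h
    rw [prod_cons] at h ⊢
    by_cases hk : k = i
    · subst hk
      have h' : SemiconjBy w.prod (of a) (of (m⁻¹ * a' * m)) := by
        unfold SemiconjBy at h ⊢
        calc w.prod * of a = (of m)⁻¹ * (of m * w.prod * of a) := by group
          _ = _ := by rw [h]; simp only [map_mul, map_inv]; group
      obtain ⟨n, hn⟩ := ih _ h'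
      exact ⟨m * n, by rw [map_mul, hn]⟩
    · exfalso
      have ha' : a' ≠ 1 := by
        rintro rfl
        exact ha ((map_eq_one_iff _ (of_injective i)).mp (by simpa [SemiconjBy] using h))
      -- `of m⁻¹ * of a' * of m * w.prod` is reduced, of length `|w| + 3`, but it equals
      -- `w.prod * of a`, of length at most `|w| + 1`.
      have hne : (some k : Option ι) ≠ some i := by simpa using hk
      have f0 : (Word.equiv w.prod).fstIdx ≠ some k := by
        rwa [show Word.equiv w.prod = w from Word.equiv.apply_symm_apply w]
      have f1 := fstIdx_equiv_of_mul h2 f0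
      have f2 := fstIdx_equiv_of_mul ha' (f1 ▸ hne)
      have l1 := wordLength_of_mul h2 f0
      have l2 := wordLength_of_mul ha' (f1 ▸ hne)
      have l3 := wordLength_of_mul (inv_ne_one.mpr h2) (f2 ▸ hne.symm)
      have heq : of m⁻¹ * (of a' * (of m * w.prod)) = w.prod * of a := by
        rw [← h.eq, map_inv]; group
      have hle := (wordLength_mul_le w.prod (of a)).trans
        (Nat.add_le_add_left (wordLength_of_le a) _)
      rw [← heq] at hle
      omega

theorem eq_one_of_commute_of_commute {i j : ι} (hij : i ≠ j) {a : M i} {b : M j} (ha : a ≠ 1)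
    (hb : b ≠ 1) {t : CoprodI M} (hta : Commute t (of a)) (htb : Commute t (of b)) : t = 1 := by
  obtain ⟨m, rfl⟩ := mem_range_of_of_semiconjBy ha hta
  obtain ⟨n, hn⟩ := mem_range_of_of_semiconjBy hb htb
  rw [eq_one_of_of_eq_of hij hn.symm, map_one]

theorem not_commute_of_of {i j : ι} (hij : i ≠ j) {a : M i} {b : M j} (ha : a ≠ 1) (hb : b ≠ 1) :
    ¬ Commute (of a : CoprodI M) (of b) := fun h =>
  have ⟨_, hn⟩ := mem_range_of_of_semiconjBy hb h
  ha (eq_one_of_of_eq_of hij hn.symm)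

theorem not_commute_commutatorElement_of {i j k : ι} (hij : i ≠ j) {a : M i} {b : M j} {c : M k}
    (ha : a ≠ 1) (hb : b ≠ 1) (hc : c ≠ 1) : ¬ Commute ⁅(of a : CoprodI M), of b⁆ (of c) := by
  intro h
  obtain ⟨n, hn⟩ := mem_range_of_of_semiconjBy hc h
  have hn1 : n = 1 := by
    have := congrArg (lift (MonoidHom.mulSingle M)) hn
    simp only [map_commutatorElement, lift_of, MonoidHom.mulSingle_apply,
      commutatorElement_eq_one_iff_commute.mpr (Pi.mulSingle_commute hij a b)] at this
    exact Pi.mulSingle_eq_one_iff.mp this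
  rw [hn1, map_one, eq_comm, commutatorElement_eq_one_iff_commute] at hn
  exact not_commute_of_of hij ha hb hn

end Monoid.CoprodI

theorem QuotientGroup.commute_mk_iff {A : Type*} [Group A] (N : Subgroup A) [N.Normal] (x y : A) :
    Commute (x : A ⧸ N) y ↔ ⁅x, y⁆ ∈ N := by
  rw [← commutatorElement_eq_one_iff_commute, ← QuotientGroup.eq_one_iff]
  rfl

theorem MulAut.commute_of_conj_eq_commutatorElement {H : Type*} [Group H] {π σ : MulAut H}
    {h a b c : H} (hπa : π a = a) (hπb : π b = b) (hπc : π c = a * c * a⁻¹)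
    (hσa : σ a = b * a * b⁻¹) (hσb : σ b = b) (hσc : σ c = c) (hh : MulAut.conj h = ⁅π, σ⁆) :
    Commute h a ∧ Commute h b ∧ Commute (h * ⁅a⁻¹, b⁆) c := by
  have key (x : H) : h * σ (π x) * h⁻¹ = π (σ x) := by
    rw [← MulAut.conj_apply, hh, commutatorElement_def]
    simp
  have hb : Commute h b := by
    have e := key b
    rwa [hπb, hσb, hπb, mul_inv_eq_iff_eq_mul] at e
  have ha : Commute h a := by
    have e := key a
    rw [hπa, hσa, map_mul, map_mul, map_inv, hπa, hπb, mul_inv_eq_iff_eq_mul] at e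
    have := (hb.inv_right.mul_right e).mul_right hb
    rwa [show b⁻¹ * (b * a * b⁻¹) * b = a by group] at this
  refine ⟨ha, hb, ?_⟩
  have e := key c
  rw [hπc, map_mul, map_mul, map_inv, hσa, hσc, hπc] at e
  have e2 : h * (b * a * b⁻¹) * c = a * c * a⁻¹ * (h * (b * a * b⁻¹)) := by
    rw [← e]; group
  have hai : h * a⁻¹ = a⁻¹ * h := ha.inv_right.eq
  show h * ⁅a⁻¹, b⁆ * c = c * (h * ⁅a⁻¹, b⁆)
  calc h * ⁅a⁻¹, b⁆ * c = h * a⁻¹ * (b * a * b⁻¹) * c := by rw [commutatorElement_def]; group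
    _ = a⁻¹ * (h * (b * a * b⁻¹) * c) := by rw [hai]; group
    _ = a⁻¹ * (a * c * a⁻¹ * (h * (b * a * b⁻¹))) := by rw [e2]
    _ = c * (h * a⁻¹ * (b * a * b⁻¹)) := by rw [hai]; group
    _ = c * (h * ⁅a⁻¹, b⁆) := by rw [commutatorElement_def]; group

theorem SimpleGraph.mem_image_supp_connectedComponentMk_iff {V : Type*} (Γ : SimpleGraph V)
    {S : Set V} (x : S) (y : V) :
    y ∈ Subtype.val '' ((Γ.induce S).connectedComponentMk x).supp ↔
      ∃ hy : y ∈ S, (Γ.induce S).Reachable x ⟨y, hy⟩ := by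
  simp [SimpleGraph.ConnectedComponent.mem_supp_iff, SimpleGraph.ConnectedComponent.eq,
    SimpleGraph.reachable_comm]

theorem Subgroup.ne_one_of_zpowers_eq_top {H : Type*} [Group H] [Nontrivial H] {g : H}
    (h : Subgroup.zpowers g = ⊤) : g ≠ 1 := by
  rintro rfl
  exact bot_ne_top (Subgroup.zpowers_one_eq_bot.symm.trans h)

namespace ArXiv

universe u uG

open SimpleGraph

section Graphs

variable {V : Type u} {Γ : SimpleGraph V}

theorem IsCompOf.subset {S C : Set V} (h : IsCompOf Γ S C) : C ⊆ S := by
  obtain ⟨c, rfl⟩ := h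
  exact fun _ ⟨x, _, hx⟩ => hx ▸ x.2

theorem HasSIL.exists_components (hsil : HasSIL Γ) : ∃ (v w u : V) (C D : Set V),
    IsCompOf Γ (star Γ v)ᶜ C ∧ IsCompOf Γ (star Γ w)ᶜ D ∧ v ≠ w ∧ Γ.IsIndepSet {v, w, u} ∧
    w ∉ C ∧ u ∈ C ∧ v ∈ D ∧ u ∉ D := by
  obtain ⟨v, w, hvw, hnadj, _, ⟨c, rfl⟩, hvc, hwc⟩ := hsil
  obtain ⟨x, rfl⟩ : ∃ x, (Γ.induce _).connectedComponentMk x = c := c.exists_rep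
  simp only [mem_image_supp_connectedComponentMk_iff, not_exists] at hvc hwc
  have hvS : v ∈ (Γ.neighborSet v ∩ Γ.neighborSet w)ᶜ := fun h => h.1.ne rfl
  have hwS : w ∈ (Γ.neighborSet v ∩ Γ.neighborSet w)ᶜ := fun h => h.2.ne rfl
  have hstar {z : V} (hz : z ∈ (Γ.neighborSet v ∩ Γ.neighborSet w)ᶜ)
      (hxz : ¬ (Γ.induce _).Reachable x ⟨z, hz⟩) : x.1 ∉ star Γ z := by
    rintro (hx | hx)
    · exact hxz (by rw [show x = ⟨z, hz⟩ from Subtype.ext hx])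
    · exact hxz (Adj.reachable (G := Γ.induce _) hx.symm)
  have hxv : x.1 ∉ star Γ v := hstar hvS (hvc hvS)
  have hxw : x.1 ∉ star Γ w := hstar hwS (hwc hwS)
  have hv_star : v ∉ star Γ w := by
    rintro (h | h)
    exacts [hvw h, hnadj h.symm]
  have hTv : (star Γ v)ᶜ ⊆ (Γ.neighborSet v ∩ Γ.neighborSet w)ᶜ := fun y hy h => hy (Or.inr h.1)
  have hTw : (star Γ w)ᶜ ⊆ (Γ.neighborSet v ∩ Γ.neighborSet w)ᶜ := fun y hy h => hy (Or.inr h.2)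
  refine ⟨v, w, x, _, _, ⟨(Γ.induce _).connectedComponentMk ⟨x, hxv⟩, rfl⟩,
    ⟨(Γ.induce _).connectedComponentMk ⟨v, hv_star⟩, rfl⟩, hvw, ?_, ?_, ?_, ?_, ?_⟩
  · have hvx : ¬ Γ.Adj v x := fun h => hxv (Or.inr h)
    have hwx : ¬ Γ.Adj w x := fun h => hxw (Or.inr h)
    simp [isIndepSet_iff, Set.pairwise_insert, hnadj, hvx, hwx, Γ.adj_comm]
  · simp only [mem_image_supp_connectedComponentMk_iff, not_exists]
    exact fun _ r => hwc hwS (r.map (Γ.induceHomOfLE hTv).toHom)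
  · simp only [mem_image_supp_connectedComponentMk_iff]
    exact ⟨hxv, Reachable.refl _⟩
  · simp only [mem_image_supp_connectedComponentMk_iff]
    exact ⟨hv_star, Reachable.refl _⟩
  · simp only [mem_image_supp_connectedComponentMk_iff, not_exists]
    exact fun _ r => hvc hvS (r.map (Γ.induceHomOfLE hTw).toHom).symm

end Graphs

section GraphProducts

variable {V : Type u} {Γ : SimpleGraph V} {G : V → Type uG} [∀ v, Group (G v)]

theorem exists_hom_coprodI_of_isIndepSet {S : Set V} (hS : Γ.IsIndepSet S) :
    ∃ φ : GraphProduct Γ G →* Monoid.CoprodI (fun x : S => G x),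
      ∀ (x : S) (g : G x), φ (of Γ G g) = Monoid.CoprodI.of (M := fun y : S => G y) g := by
  classical
  let f (x : V) : G x →* Monoid.CoprodI (fun y : S => G y) :=
    if hx : x ∈ S then Monoid.CoprodI.of (M := fun y : S => G y) (i := ⟨x, hx⟩) else 1
  have hf_of (x : S) (g : G x) : f x g = Monoid.CoprodI.of (M := fun y : S => G y) g := by
    simp [f, x.2]
  have hf_one {x : V} (hx : x ∉ S) (g : G x) : f x g = 1 := by simp [f, hx]
  have hrels : Subgroup.normalClosure (rels Γ G) ≤ (Monoid.CoprodI.lift f).ker := by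
    refine Subgroup.normalClosure_le_normal ?_
    rintro _ ⟨x, y, hxy, g, k, rfl⟩
    have : Commute (f x g) (f y k) := by
      by_cases hx : x ∈ S
      · by_cases hy : y ∈ S
        · exact absurd hxy (hS hx hy hxy.ne)
        · rw [hf_one hy]; exact Commute.one_right _
      · rw [hf_one hx]; exact Commute.one_left _
    simpa [← commutatorElement_def, commutatorElement_eq_one_iff_commute] using this
  exact ⟨QuotientGroup.lift _ _ hrels, fun x g => (Monoid.CoprodI.lift_of f g).trans (hf_of x g)⟩

theorem commutatorElement_notMem_range_conj {v w u : V} (hvw : v ≠ w)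
    (hS : Γ.IsIndepSet {v, w, u}) {a : G v} {b : G w} {c : G u} (ha : a ≠ 1) (hb : b ≠ 1)
    (hc : c ≠ 1) {π σ : MulAut (GraphProduct Γ G)} {C D : Set V}
    (hπ : IsPartialConjBy Γ G a π C) (hσ : IsPartialConjBy Γ G b σ D)
    (hvC : v ∉ C) (hwC : w ∉ C) (huC : u ∈ C) (hvD : v ∈ D) (hwD : w ∉ D) (huD : u ∉ D) :
    ⁅π, σ⁆ ∉ (MulAut.conj : GraphProduct Γ G →* MulAut (GraphProduct Γ G)).range := by
  classical
  rintro ⟨h, hh⟩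
  obtain ⟨hha, hhb, hhc⟩ := MulAut.commute_of_conj_eq_commutatorElement (hπ.2 v hvC a)
    (hπ.2 w hwC b) (hπ.1 u huC c) (hσ.1 v hvD a) (hσ.2 w hwD b) (hσ.2 u huD c) hh
  obtain ⟨φ, hφ⟩ := exists_hom_coprodI_of_isIndepSet (G := G) hS
  let i : ({v, w, u} : Set V) := ⟨v, by simp⟩
  let j : ({v, w, u} : Set V) := ⟨w, by simp⟩
  let k : ({v, w, u} : Set V) := ⟨u, by simp⟩
  have hij : i ≠ j := fun h => hvw (congrArg Subtype.val h)
  have hφa : φ (of Γ G a) = Monoid.CoprodI.of (i := i) a := hφ i a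
  have hφb : φ (of Γ G b) = Monoid.CoprodI.of (i := j) b := hφ j b
  have hφc : φ (of Γ G c) = Monoid.CoprodI.of (i := k) c := hφ k c
  have ht : φ h = 1 := Monoid.CoprodI.eq_one_of_commute_of_commute hij ha hb
    (by simpa only [hφa] using hha.map φ) (by simpa only [hφb] using hhb.map φ)
  have hcomm := hhc.map φ
  simp only [map_mul, map_commutatorElement, map_inv, ht, one_mul, hφa, hφb, hφc] at hcomm
  exact absurd hcomm
    (Monoid.CoprodI.not_commute_commutatorElement_of hij (inv_ne_one.mpr ha) hb hc)

end GraphProducts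

theorem SIL_commutator_not_inner_general {V : Type u} (Γ : SimpleGraph V)
    (G : V → Type uG) [∀ v, Group (G v)] [∀ v, Nontrivial (G v)]
    (gen : ∀ v, G v) (hgen : ∀ v, Subgroup.zpowers (gen v) = ⊤)
    (πfam : TV Γ → MulAut (GraphProduct Γ G))
    (hπ : ∀ p : TV Γ, IsPartialConj Γ G gen (πfam p) p.1.1 p.1.2)
    [hNi : (((MulAut.conj : GraphProduct Γ G →* MulAut (GraphProduct Γ G)).range).subgroupOf
      (Subgroup.closure (Set.range πfam))).Normal]
    (hsil : HasSIL Γ) :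
    (∃ p q : TV Γ,
      ⁅πfam p, πfam q⁆ ∉
        (MulAut.conj : GraphProduct Γ G →* MulAut (GraphProduct Γ G)).range) ∧
    ∃ a b : ↥(Subgroup.closure (Set.range πfam)) ⧸
        ((MulAut.conj : GraphProduct Γ G →* MulAut (GraphProduct Γ G)).range).subgroupOf
          (Subgroup.closure (Set.range πfam)),
      a * b ≠ b * a := by
  obtain ⟨v, w, u, C, D, hC, hD, hvw, hS, hwC, huC, hvD, huD⟩ := hsil.exists_components
  let p : TV Γ := ⟨(v, C), hC⟩
  let q : TV Γ := ⟨(w, D), hD⟩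
  have hgen_ne_one (x : V) : gen x ≠ 1 := Subgroup.ne_one_of_zpowers_eq_top (hgen x)
  have key : ⁅πfam p, πfam q⁆ ∉
      (MulAut.conj : GraphProduct Γ G →* MulAut (GraphProduct Γ G)).range :=
    commutatorElement_notMem_range_conj hvw hS (hgen_ne_one v) (hgen_ne_one w) (hgen_ne_one u)
      (hπ p) (hπ q) (fun h => hC.subset h (Set.mem_insert v _)) hwC huC hvD
      (fun h => hD.subset h (Set.mem_insert w _)) huD
  exact ⟨⟨p, q, key⟩, QuotientGroup.mk ⟨πfam p, Subgroup.subset_closure ⟨p, rfl⟩⟩,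
    QuotientGroup.mk ⟨πfam q, Subgroup.subset_closure ⟨q, rfl⟩⟩,
    fun h => key ((QuotientGroup.commute_mk_iff (MulAut.conj.range.subgroupOf _) _ _).mp h)⟩

/-- If `Γ` has a SIL, then some two partial conjugations have a
commutator which is not inner; in particular `Out^pc(G_Γ)` is not abelian. -/
theorem SIL_commutator_not_inner {V : Type u} [Finite V] (Γ : SimpleGraph V)
    (G : V → Type uG) [∀ v, Group (G v)] [∀ v, Nontrivial (G v)]
    (gen : ∀ v, G v) (hgen : ∀ v, Subgroup.zpowers (gen v) = ⊤)
    (πfam : TV Γ → MulAut (GraphProduct Γ G))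
    (hπ : ∀ p : TV Γ, IsPartialConj Γ G gen (πfam p) p.1.1 p.1.2)
    [hNi : (((MulAut.conj : GraphProduct Γ G →* MulAut (GraphProduct Γ G)).range).subgroupOf
      (Subgroup.closure (Set.range πfam))).Normal]
    (hsil : HasSIL Γ) :
    (∃ p q : TV Γ,
      ⁅πfam p, πfam q⁆ ∉
        (MulAut.conj : GraphProduct Γ G →* MulAut (GraphProduct Γ G)).range) ∧
    ∃ a b : ↥(Subgroup.closure (Set.range πfam)) ⧸
        ((MulAut.conj : GraphProduct Γ G →* MulAut (GraphProduct Γ G)).range).subgroupOf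
          (Subgroup.closure (Set.range πfam)),
      a * b ≠ b * a :=
  SIL_commutator_not_inner_general Γ G gen hgen πfam hπ (hNi := hNi) hsil

end ArXiv
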